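/- arXiv:2002.07403 — 2 statements merged into one kernel-verified Lean document; each statement's English description precedes it below -/
import Mathlib

section
/- Let n and c be natural numbers with 1 ≤ c ≤ n, let k = ⌊n/c⌋, and define Cls : ℕ → ℕ by Cls(j) = ⌊j/k⌋ if j < c·k, and Cls(j) = j − c·k if c·k ≤ j < n. Then for every cluster index i < c, the number of indices j < n with Cls(j) = i equals k + 1 if i < n mod c, and equals k otherwise. In particular, exactly n mod c clusters have k + 1 nodes and exactly c − (n mod c) clusters have k nodes. -/
/-- Flow cluster assignment: the size of cluster `i` is `k + 1` if
`i < n % c`, and `k` otherwise. -/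
theorem cluster_sizes (n c : ℕ) (hc : 1 ≤ c) (hcn : c ≤ n)
    (k : ℕ) (hk : k = n / c)
    (Cls : ℕ → ℕ)
    (hCls : ∀ j < n, Cls j = if j < c * k then j / k else j - c * k) :
    ∀ i < c,
      ((Finset.range n).filter (fun j => Cls j = i)).card =
        if i < n % c then k + 1 else k := by
  intro i hi
  have hk1 : 1 ≤ k := by rw [hk]; exact (Nat.one_le_div_iff hc).2 hcn
  have hmod : c * k + n % c = n := by rw [hk]; exact Nat.div_add_mod n c
  have hmodlt : n % c < c := Nat.mod_lt _ hc
  have hiklt : i * k + k ≤ c * k := by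
    have h1 : (i + 1) * k ≤ c * k := Nat.mul_le_mul_right _ hi
    nlinarith
  have hdiv : ∀ j, j < c * k → (j / k = i ↔ i * k ≤ j ∧ j < i * k + k) := by
    intro j hj
    constructor
    · intro h
      subst h
      refine ⟨Nat.div_mul_le_self j k, ?_⟩
      have h2 : j / k < j / k + 1 := Nat.lt_succ_self _
      have := (Nat.div_lt_iff_lt_mul (show 0 < k by omega)).1 h2
      rw [Nat.add_mul, one_mul] at this
      exact this
    · rintro ⟨h1, h2⟩
      exact Nat.div_eq_of_lt_le (by rwa [mul_comm] at h1 ⊢) (by rw [Nat.succ_mul]; omega)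
  have key : (Finset.range n).filter (fun j => Cls j = i) =
      (Finset.Ico (i * k) (i * k + k)) ∪
        (Finset.range n).filter (fun j => c * k ≤ j ∧ j - c * k = i) := by
    ext j
    simp only [Finset.mem_filter, Finset.mem_range, Finset.mem_union, Finset.mem_Ico]
    constructor
    · rintro ⟨hjn, hj⟩
      rw [hCls j hjn] at hj
      by_cases h : j < c * k
      · left; rw [if_pos h] at hj; exact (hdiv j h).1 hj
      · right; rw [if_neg h] at hj; exact ⟨hjn, le_of_not_gt h, hj⟩
    · rintro (⟨h1, h2⟩ | ⟨hjn, h1, h2⟩)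
      · have hjck : j < c * k := lt_of_lt_of_le h2 hiklt
        have hjn : j < n := by omega
        exact ⟨hjn, by rw [hCls j hjn, if_pos hjck]; exact (hdiv j hjck).2 ⟨h1, h2⟩⟩
      · exact ⟨hjn, by rw [hCls j hjn, if_neg (not_lt.2 h1)]; exact h2⟩
  have hsnd : (Finset.range n).filter (fun j => c * k ≤ j ∧ j - c * k = i) =
      if i < n % c then {c * k + i} else ∅ := by
    by_cases h : i < n % c
    · rw [if_pos h]; ext j
      simp only [Finset.mem_filter, Finset.mem_range, Finset.mem_singleton]
      omega
    · rw [if_neg h]; ext j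
      simp only [Finset.mem_filter, Finset.mem_range, Finset.notMem_empty, iff_false,
        not_and]
      omega
  have hdisj : Disjoint (Finset.Ico (i * k) (i * k + k))
      ((Finset.range n).filter (fun j => c * k ≤ j ∧ j - c * k = i)) := by
    rw [Finset.disjoint_left]
    intro j hj hj2
    simp only [Finset.mem_Ico] at hj
    simp only [Finset.mem_filter] at hj2
    omega
  rw [key, Finset.card_union_of_disjoint hdisj, Nat.card_Ico, hsnd]
  by_cases h : i < n % c
  · rw [if_pos h, if_pos h]; simp
  · rw [if_neg h, if_neg h]; simp
end

section
/- Let n and c be natural numbers with 1 ≤ c ≤ n, let k = ⌊n/c⌋, and define Cls : ℕ → ℕ by Cls(j) = ⌊j/k⌋ if j < c·k, and Cls(j) = j − c·k if c·k ≤ j < n. Then for any two cluster indices i, i' < c, the sizes of clusters i and i' differ by at most one, i.e., | |{j < n : Cls(j) = i}| − |{j < n : Cls(j) = i'}| | ≤ 1. -/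
/-- Flow cluster assignment: sizes of any two clusters differ by at most one. -/
theorem cluster_sizes_differ_by_at_most_one (n c : ℕ) (hc : 1 ≤ c) (hcn : c ≤ n)
    (k : ℕ) (hk : k = n / c)
    (Cls : ℕ → ℕ)
    (hCls : ∀ j < n, Cls j = if j < c * k then j / k else j - c * k) :
    ∀ i < c, ∀ i' < c,
      |(((Finset.range n).filter (fun j => Cls j = i)).card : ℤ) -
        (((Finset.range n).filter (fun j => Cls j = i')).card : ℤ)| ≤ 1 := by
  intro i hi i' hi'
  have hk0 : 1 ≤ k := by
    subst hk; exact (Nat.one_le_div_iff hc).mpr hcn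
  have hckn : c * k ≤ n := by
    subst hk; exact Nat.mul_div_le n c |>.trans_eq rfl |>.trans (le_refl n)
  have key : ∀ m, m < c → ((Finset.range n).filter (fun j => Cls j = m)).card
      = k + (if c * k + m < n then 1 else 0) := by
    intro m hm
    have hmk : m * k + k ≤ c * k := by
      have : (m + 1) * k ≤ c * k := Nat.mul_le_mul_right k hm
      linarith [this]
    have hsub : (Finset.range n).filter (fun j => Cls j = m)
        = Finset.Ico (m * k) (m * k + k) ∪ (if c * k + m < n then {c * k + m} else ∅) := by
      ext j
      simp only [Finset.mem_filter, Finset.mem_range, Finset.mem_union, Finset.mem_Ico]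
      constructor
      · rintro ⟨hj, hcls⟩
        rw [hCls j hj] at hcls
        by_cases h : j < c * k
        · simp only [h, if_pos] at hcls
          left
          constructor
          · calc m * k = j / k * k := by rw [hcls]
              _ ≤ j := Nat.div_mul_le_self j k
          · have : j / k < m + 1 := by rw [hcls]; exact Nat.lt_succ_self m
            have h2 := (Nat.div_lt_iff_lt_mul hk0).mp this
            have h3 : (m + 1) * k = m * k + k := by ring
            omega
        · simp only [h, if_neg, not_false_iff] at hcls
          right
          have hj2 : j = c * k + m := by omega
          have : c * k + m < n := by omega
          simp [this, hj2]
      · intro h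
        rcases h with ⟨h1, h2⟩ | h
        · have hjck : j < c * k := by omega
          have hjn : j < c * k → j < n := fun hh => lt_of_lt_of_le hh hckn
          refine ⟨hjn hjck, ?_⟩
          rw [hCls j (hjn hjck), if_pos hjck]
          have : j / k = m := by
            apply Nat.div_eq_of_lt_le
            · omega
            · calc j < m * k + k := h2
                _ = (m + 1) * k := by ring
          exact this
        · by_cases hcm : c * k + m < n
          · simp [hcm] at h
            subst h
            refine ⟨hcm, ?_⟩
            rw [hCls _ hcm, if_neg (by omega)]
            omega
          · simp [hcm] at h
    rw [hsub, Finset.card_union_of_disjoint]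
    · rw [Nat.card_Ico]
      split_ifs with h
      · simp
      · simp
    · rw [Finset.disjoint_left]
      intro a ha hb
      simp only [Finset.mem_Ico] at ha
      split_ifs at hb with h
      · simp at hb; omega
      · simp at hb
  rw [key i hi, key i' hi']
  split_ifs <;> simp
end
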